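/- arXiv:2310.03619 — 2 statements merged into one kernel-verified Lean document; each statement's English description precedes it below -/
import Mathlib

section
/- Let S ⊆ ℕ have lower density ξ = liminf_{N→∞} (1/N)·#(S ∩ [1,N]) > 0, let α > 0 and δ > 0. Then liminf_{T→∞} (1/T)·meas{t ∈ [0,T] : ∃ n ∈ S, |t − nα| ≤ δ} ≥ ξ·α^{-1}·min(α, 2δ). -/
open MeasureTheory Filter

lemma arith_lb (α ξ ε m θ q T N c P K : ℝ)
    (hα : 0 < α) (hξ : 0 < ξ) (hm : 0 < m) (hθ0 : 0 < θ)
    (hK : K = ξ * α⁻¹ * m) (hθ2 : K - ε ≤ θ^2 * K)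
    (hqα : q * α = T) (hT0 : 0 < T)
    (h2 : θ * ξ * N ≤ c) (h3 : q - 3/2 < N) (h4 : 3/2 ≤ (1-θ) * q)
    (h1 : m * c ≤ P) : K - ε ≤ P / T := by
  rw [le_div_iff₀ hT0]
  have hθq : θ * q ≤ q - 3/2 := by nlinarith
  have hainv : α⁻¹ * α = 1 := inv_mul_cancel₀ hα.ne'
  calc (K - ε) * T ≤ (θ^2 * K) * T := mul_le_mul_of_nonneg_right hθ2 hT0.le
    _ = θ^2 * ξ * m * q := by
        rw [hK, ← hqα]; linear_combination θ^2 * ξ * m * q * hainv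
    _ = θ * ξ * m * (θ * q) := by ring
    _ ≤ θ * ξ * m * (q - 3/2) :=
        mul_le_mul_of_nonneg_left hθq (by positivity)
    _ ≤ θ * ξ * m * N := mul_le_mul_of_nonneg_left h3.le (by positivity)
    _ = m * (θ * ξ * N) := by ring
    _ ≤ m * c := mul_le_mul_of_nonneg_left h2 hm.le
    _ ≤ P := h1

lemma meas_lb (S : Set ℕ) (α δ : ℝ) (hα : 0 < α) (hδ : 0 < δ) (T : ℝ) (hT : α ≤ T) :
    (min α (2*δ)) * ((S ∩ Set.Icc 1 (⌊T/α - 1/2⌋₊ : ℕ)).ncard : ℝ)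
      ≤ (volume ({t : ℝ | ∃ n ∈ S, |t - (n:ℝ)*α| ≤ δ} ∩ Set.Icc 0 T)).toReal := by
  classical
  set m : ℝ := min α (2*δ) with hm
  have hm0 : 0 < m := lt_min hα (by linarith)
  have hmα : m ≤ α := min_le_left _ _
  have hmδ : m ≤ 2*δ := min_le_right _ _
  set N : ℕ := ⌊T/α - 1/2⌋₊ with hN
  have hT0 : 0 < T := lt_of_lt_of_le hα hT
  have harg : (0:ℝ) ≤ T/α - 1/2 := by
    have : (1:ℝ) ≤ T/α := (one_le_div hα).mpr hT
    linarith
  have hNle : (N:ℝ) ≤ T/α - 1/2 := Nat.floor_le harg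
  have hNαT : (N:ℝ) * α + m/2 ≤ T := by
    have h1 : (N:ℝ) * α ≤ T - α/2 := by
      have := mul_le_mul_of_nonneg_right hNle hα.le
      rw [sub_mul, div_mul_cancel₀ _ hα.ne'] at this
      linarith
    linarith
  set F : Finset ℕ := (Finset.Icc 1 N).filter (· ∈ S) with hF
  have hFeq : S ∩ Set.Icc 1 N = ↑F := by
    ext n
    simp only [hF, Set.mem_inter_iff, Set.mem_Icc, Finset.coe_filter, Finset.mem_Icc, Set.mem_setOf_eq]
    tauto
  rw [hFeq, Set.ncard_coe_finset]
  set J : ℕ → Set ℝ := fun n => Set.Ioc ((n:ℝ)*α - m/2) ((n:ℝ)*α + m/2) with hJ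
  have hsub : (⋃ n ∈ F, J n) ⊆ {t : ℝ | ∃ n ∈ S, |t - (n:ℝ)*α| ≤ δ} ∩ Set.Icc 0 T := by
    intro t ht
    simp only [Set.mem_iUnion] at ht
    obtain ⟨n, hnF, htn⟩ := ht
    simp only [hF, Finset.mem_filter, Finset.mem_Icc] at hnF
    obtain ⟨⟨hn1, hnN⟩, hnS⟩ := hnF
    obtain ⟨htl, htr⟩ := htn
    have hn1' : (1:ℝ) ≤ (n:ℝ) := by exact_mod_cast hn1
    have hnN' : (n:ℝ) ≤ (N:ℝ) := by exact_mod_cast hnN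
    constructor
    · exact ⟨n, hnS, by rw [abs_le]; constructor <;> nlinarith⟩
    · constructor
      · nlinarith
      · nlinarith [mul_le_mul_of_nonneg_right hnN' hα.le]
  have hdisj : (↑F : Set ℕ).PairwiseDisjoint J := by
    intro a ha b hb hab
    have key : ∀ x y : ℕ, x < y → Disjoint (J x) (J y) := by
      intro x y hxy
      rw [hJ]
      simp only
      rw [Set.Ioc_disjoint_Ioc]
      have : (x:ℝ) + 1 ≤ (y:ℝ) := by exact_mod_cast hxy
      refine le_trans (min_le_left _ _) (le_trans ?_ (le_max_right _ _))
      nlinarith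
    rcases lt_or_gt_of_ne hab with h | h
    · exact key a b h
    · exact (key b a h).symm
  have hmeas : ∀ n ∈ F, MeasurableSet (J n) := fun n _ => measurableSet_Ioc
  have hvol : volume (⋃ n ∈ F, J n) = F.card * ENNReal.ofReal m := by
    rw [measure_biUnion_finset hdisj hmeas]
    have : ∀ n ∈ F, volume (J n) = ENNReal.ofReal m := by
      intro n _
      rw [hJ]
      simp only
      rw [Real.volume_Ioc]
      ring_nf
    rw [Finset.sum_congr rfl this, Finset.sum_const, nsmul_eq_mul]
  have hfin : volume ({t : ℝ | ∃ n ∈ S, |t - (n:ℝ)*α| ≤ δ} ∩ Set.Icc 0 T) ≠ ⊤ := by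
    refine ne_top_of_le_ne_top ?_ (measure_mono Set.inter_subset_right)
    rw [Real.volume_Icc]
    exact ENNReal.ofReal_ne_top
  have hle : volume (⋃ n ∈ F, J n) ≤ volume ({t : ℝ | ∃ n ∈ S, |t - (n:ℝ)*α| ≤ δ} ∩ Set.Icc 0 T) :=
    measure_mono hsub
  have := ENNReal.toReal_mono hfin hle
  rw [hvol] at this
  calc m * (F.card : ℝ) = ((F.card : ENNReal) * ENNReal.ofReal m).toReal := by
        rw [ENNReal.toReal_mul, ENNReal.toReal_ofReal hm0.le]
        simp [mul_comm]
    _ ≤ _ := this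

theorem stmt_1 (S : Set ℕ) (ξ α δ : ℝ) (hα : 0 < α) (hδ : 0 < δ)
    (hξ : Filter.atTop.liminf
      (fun N : ℕ => ((S ∩ Set.Icc 1 N).ncard : ℝ) / N) = ξ)
    (hξpos : 0 < ξ) :
    ξ * α⁻¹ * min α (2 * δ) ≤ Filter.atTop.liminf (fun T : ℝ =>
      (volume ({t : ℝ | ∃ n ∈ S, |t - (n : ℝ) * α| ≤ δ} ∩ Set.Icc 0 T)).toReal / T) := by
  set m : ℝ := min α (2*δ) with hm
  have hm0 : 0 < m := lt_min hα (by linarith)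
  set u : ℕ → ℝ := fun N => ((S ∩ Set.Icc 1 N).ncard : ℝ) / N with hu
  set f : ℝ → ℝ := fun T =>
    (volume ({t : ℝ | ∃ n ∈ S, |t - (n : ℝ) * α| ≤ δ} ∩ Set.Icc 0 T)).toReal / T with hf
  set K : ℝ := ξ * α⁻¹ * m with hK
  have hK0 : 0 < K := by
    have : 0 < α⁻¹ := inv_pos.mpr hα
    positivity
  -- coboundedness of f
  have hf1 : ∀ᶠ T in atTop, f T ≤ 1 := by
    filter_upwards [eventually_gt_atTop 0] with T hT0
    rw [hf]
    simp only
    rw [div_le_one hT0]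
    have h1 : volume ({t : ℝ | ∃ n ∈ S, |t - (n : ℝ) * α| ≤ δ} ∩ Set.Icc 0 T)
        ≤ ENNReal.ofReal T := by
      refine le_trans (measure_mono Set.inter_subset_right) ?_
      rw [Real.volume_Icc]
      exact ENNReal.ofReal_le_ofReal (by linarith)
    calc (volume _).toReal ≤ (ENNReal.ofReal T).toReal :=
          ENNReal.toReal_mono ENNReal.ofReal_ne_top h1
      _ = T := ENNReal.toReal_ofReal hT0.le
  have hcob : IsCoboundedUnder (· ≥ ·) atTop f :=
    (isBoundedUnder_of_eventually_le hf1).isCoboundedUnder_ge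
  refine le_of_forall_pos_le_add fun ε hε => ?_
  have key : K - ε ≤ atTop.liminf f := by
    set θ : ℝ := max (1 - ε/(2*K)) (1/2) with hθ
    have hθhalf : (1:ℝ)/2 ≤ θ := le_max_right _ _
    have hθ0 : 0 < θ := by linarith
    have hθ1 : θ < 1 := by
      apply max_lt
      · have : 0 < ε/(2*K) := by positivity
        linarith
      · norm_num
    have hθ2 : K - ε ≤ θ^2 * K := by
      have hd : ε/(2*K) * (2*K) = ε := div_mul_cancel₀ _ (by positivity)
      rcases max_cases (1 - ε/(2*K)) (1/2) with ⟨h, h'⟩ | ⟨h, h'⟩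
      · rw [hθ, h]
        nlinarith [mul_nonneg (sq_nonneg (ε/(2*K))) hK0.le]
      · rw [hθ, h]
        have : K ≤ ε := by nlinarith
        nlinarith
    -- eventually in N
    have hA : ∀ᶠ N in atTop, θ * ξ < u N := by
      apply eventually_lt_of_lt_liminf
      · rw [hξ]; nlinarith
      · exact isBoundedUnder_of_eventually_ge
          (Eventually.of_forall fun N => by rw [hu]; positivity)
    -- N(T) → ∞
    set Nf : ℝ → ℕ := fun T => ⌊T/α - 1/2⌋₊ with hNf
    have hNtend : Tendsto Nf atTop atTop := by
      apply tendsto_nat_floor_atTop.comp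
      exact tendsto_atTop_add_const_right atTop (-(1/2))
        ((tendsto_id.atTop_div_const hα))
    have hA' : ∀ᶠ T in atTop, θ * ξ < u (Nf T) := hNtend.eventually hA
    have hN1 : ∀ᶠ T in atTop, 1 ≤ Nf T := hNtend.eventually (eventually_ge_atTop 1)
    refine le_liminf_of_le hcob ?_
    filter_upwards [hA', hN1, eventually_ge_atTop α,
      eventually_ge_atTop (3*α/(2*(1-θ)))] with T hTA hTN hTα hTbig
    have hT0 : 0 < T := lt_of_lt_of_le hα hTα
    have h1 := meas_lb S α δ hα hδ T hTα
    have hN0 : (0:ℝ) < (Nf T : ℝ) := by exact_mod_cast hTN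
    have h2 : θ * ξ * (Nf T : ℝ) ≤ ((S ∩ Set.Icc 1 (Nf T)).ncard : ℝ) := by
      have := (lt_div_iff₀ hN0).mp hTA
      linarith
    have hqα : (T/α) * α = T := div_mul_cancel₀ _ hα.ne'
    have h3 : T/α - 3/2 < ((Nf T : ℕ) : ℝ) := by
      have := Nat.sub_one_lt_floor (T/α - 1/2)
      simp only [hNf]
      linarith
    have h4 : 3/2 ≤ (1-θ) * (T/α) := by
      have h1θ : 0 < 1 - θ := by linarith
      have h5 := (div_le_iff₀ (by positivity : (0:ℝ) < 2*(1-θ))).mp hTbig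
      rw [← mul_div_assoc, le_div_iff₀ hα]
      nlinarith
    exact arith_lb α ξ ε m θ (T/α) T ((Nf T : ℕ) : ℝ)
      ((S ∩ Set.Icc 1 (Nf T)).ncard : ℝ) _ K hα hξpos hm0 hθ0 hK hθ2 hqα hT0 h2 h3 h4 h1
  linarith [key]
end

section
/- Let D ⊆ ℂ be an open vertical strip, K ⊆ D compact with connected complement, and suppose Z : ℂ → ℂ satisfies: for every ε > 0 and every zero-free continuous f on K analytic in the interior of K, liminf_{N→∞} (1/N)·#{1 ≤ n ≤ N : max_{s∈K}|Z(s+inα) − f(s)| < ε} > 0, for some fixed α > 0 (α-discrete universality on every admissible K ⊆ D). Then for every admissible K, ε > 0, and admissible f, liminf_{T→∞} (1/T)·meas{0 ≤ t ≤ T : max_{s∈K}|Z(s+it) − f(s)| < ε} ≥ ξ₁·α^{-1}·min(α, 2δ), where ξ₁ is the discrete lower density obtained for the approximant g = e^p (p a polynomial with max_{s∈K}|e^p − f| < ε/4) on an enlarged compact set K₀ ⊇ K with dist(K, ℂ∖K₀) > δ, applied with accuracy ε/2, and δ > 0 is chosen by uniform continuity of g so that |g(s+iτ) − g(s)| < ε/4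 for all s ∈ K, |τ| ≤ δ. -/
open MeasureTheory Filter Topology Set Complex Function

/-!
An index `n` at which `Z(· + inα)` is `ε/2`-close to `g = e^p` on `K₀` produces a whole interval
of times `t` around `nα` at which `Z(· + it)` is `ε`-close to `f` on `K`: for `|t - nα| ≤ δ` the
shift `s ↦ s + i(t - nα)` maps `K` into `K₀`, moves `g` by less than `ε/4`, and `g` is
`ε/4`-close to `f` on `K`. Intervals of length `min(α, 2δ)` centred at the points `nα` are
disjoint, and about `T/α` of them fit into `[0, T]`, which turns the discrete density into the
continuous one at the cost of the factor `α⁻¹ · min(α, 2δ)`.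
-/

section VerticalShift

variable {K K₀ : Set ℂ} {δ : ℝ}

lemma add_mul_I_mem_of_abs_le (hdist : ∀ s ∈ K, ∀ z ∉ K₀, δ < dist s z) {s : ℂ} (hs : s ∈ K)
    {τ : ℝ} (hτ : |τ| ≤ δ) : s + τ * I ∈ K₀ := by
  by_contra h
  have := hdist s hs _ h
  rw [dist_self_add_right, norm_mul, norm_I, norm_real, Real.norm_eq_abs, mul_one] at this
  linarith

lemma norm_sub_lt_of_shift {Z f g : ℂ → ℂ} {ε u t : ℝ}
    (hdist : ∀ s ∈ K, ∀ z ∉ K₀, δ < dist s z) (hg : ∀ s ∈ K, ‖g s - f s‖ < ε / 4)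
    (hgshift : ∀ τ : ℝ, |τ| ≤ δ → ∀ s ∈ K, ‖g (s + τ * I) - g s‖ < ε / 4)
    (hZ : ∀ s ∈ K₀, ‖Z (s + u * I) - g s‖ < ε / 2) (ht : |t - u| ≤ δ) {s : ℂ} (hs : s ∈ K) :
    ‖Z (s + t * I) - f s‖ < ε := by
  have hshift : s + t * I = (s + ↑(t - u) * I) + u * I := by push_cast; ring
  calc ‖Z (s + t * I) - f s‖
      = ‖(Z (s + ↑(t - u) * I + u * I) - g (s + ↑(t - u) * I))
        + (g (s + ↑(t - u) * I) - g s) + (g s - f s)‖ := by rw [hshift]; congr 1; abel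
    _ ≤ ‖Z (s + ↑(t - u) * I + u * I) - g (s + ↑(t - u) * I)‖
        + ‖g (s + ↑(t - u) * I) - g s‖ + ‖g s - f s‖ := norm_add₃_le
    _ < ε / 2 + ε / 4 + ε / 4 := by
        gcongr
        · exact hZ _ (add_mul_I_mem_of_abs_le hdist hs ht)
        · exact hgshift _ ht s hs
        · exact hg s hs
    _ = ε := by ring

end VerticalShift

section Density

variable {S : Set ℕ} {G : Set ℝ} {α w : ℝ}

lemma tendsto_natFloor_sub_div_div_atTop (a : ℝ) {b : ℝ} (hb : 0 < b) :
    Tendsto (fun T : ℝ => (⌊(T - a) / b⌋₊ : ℝ) / T) atTop (𝓝 b⁻¹) := by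
  -- `⌊x⌋₊ / x → 1` along `x = (T - a) / b`, and `x / T = b⁻¹ (1 - a / T)`
  have hx : Tendsto (fun T : ℝ => (T - a) / b) atTop atTop :=
    (tendsto_atTop_add_const_right _ (-a) tendsto_id).atTop_div_const hb
  have hratio : Tendsto (fun T : ℝ => b⁻¹ * (1 - a * T⁻¹)) atTop (𝓝 b⁻¹) := by
    simpa using (tendsto_inv_atTop_zero.const_mul a).const_sub 1 |>.const_mul b⁻¹
  have := (tendsto_nat_floor_div_atTop.comp hx).mul hratio
  rw [one_mul] at this
  refine this.congr' ?_
  filter_upwards [eventually_ne_atTop 0, eventually_gt_atTop a] with T hT hTa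
  have : T - a ≠ 0 := sub_ne_zero.2 hTa.ne'
  simp only [comp_apply]
  field_simp

lemma pairwise_disjoint_Ico_natCast_mul (hw : 0 ≤ w) (hwα : w ≤ α) :
    Pairwise (Disjoint on fun n : ℕ => Ico (n * α - w / 2) (n * α + w / 2)) := by
  refine (pairwise_disjoint_on _).2 fun m n hmn => Set.disjoint_left.2 ?_
  rintro t ⟨-, htm⟩ ⟨htn, -⟩
  have : ((m : ℝ) + 1) * α ≤ n * α :=
    mul_le_mul_of_nonneg_right (by exact_mod_cast hmn) (hw.trans hwα)
  linarith

lemma sep_subset_Icc (G : Set ℝ) (T : ℝ) : {t | 0 ≤ t ∧ t ≤ T ∧ t ∈ G} ⊆ Icc 0 T :=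
  fun _ ht => ⟨ht.1, ht.2.1⟩

lemma volume_real_sep_Icc_le (G : Set ℝ) {T : ℝ} (hT : 0 ≤ T) :
    volume.real {t | 0 ≤ t ∧ t ≤ T ∧ t ∈ G} ≤ T := by
  calc volume.real {t | 0 ≤ t ∧ t ≤ T ∧ t ∈ G} ≤ volume.real (Icc 0 T) :=
        measureReal_mono (sep_subset_Icc G T) measure_Icc_lt_top.ne
    _ = T := by rw [Real.volume_real_Icc_of_le hT, sub_zero]

lemma mul_ncard_le_volume_real (hw : 0 < w) (hwα : w ≤ α)
    (hSG : ∀ n ∈ S, ∀ t : ℝ, |t - n * α| ≤ w / 2 → t ∈ G) {N : ℕ} {T : ℝ}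
    (hNT : N * α + w / 2 ≤ T) :
    w * {n | 1 ≤ n ∧ n ≤ N ∧ n ∈ S}.ncard ≤ volume.real {t | 0 ≤ t ∧ t ≤ T ∧ t ∈ G} := by
  classical
  set F := (Finset.Icc 1 N).filter (· ∈ S)
  have hF : {n | 1 ≤ n ∧ n ≤ N ∧ n ∈ S} = F := by ext; simp [F, and_assoc]
  have hsub : ⋃ n ∈ F, Ico (n * α - w / 2) (n * α + w / 2) ⊆ {t | 0 ≤ t ∧ t ≤ T ∧ t ∈ G} := by
    simp only [iUnion_subset_iff]
    intro n hn t ⟨ht₁, ht₂⟩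
    obtain ⟨⟨hn1, hnN⟩, hnS⟩ := by simpa [F] using hn
    have h1 : (1 : ℝ) ≤ n := by exact_mod_cast hn1
    have hN : (n : ℝ) ≤ N := by exact_mod_cast hnN
    refine ⟨by nlinarith, by nlinarith, hSG n hnS t (abs_le.2 ⟨by linarith, by linarith⟩)⟩
  calc w * {n | 1 ≤ n ∧ n ≤ N ∧ n ∈ S}.ncard
      = ∑ n ∈ F, volume.real (Ico (n * α - w / 2) (n * α + w / 2)) := by
        simp [hF, mul_comm, hw.le]
    _ = volume.real (⋃ n ∈ F, Ico (n * α - w / 2) (n * α + w / 2)) :=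
        (measureReal_biUnion_finset ((pairwise_disjoint_Ico_natCast_mul hw.le hwα).set_pairwise _)
          (fun _ _ => measurableSet_Ico) fun _ _ => measure_Ico_lt_top.ne).symm
    _ ≤ volume.real {t | 0 ≤ t ∧ t ≤ T ∧ t ∈ G} :=
        measureReal_mono hsub
          ((measure_mono (sep_subset_Icc G T)).trans_lt measure_Icc_lt_top).ne

theorem liminf_ncard_div_mul_le_liminf_volume_real_div (hα : 0 < α) (hw : 0 < w) (hwα : w ≤ α)
    (hSG : ∀ n ∈ S, ∀ t : ℝ, |t - n * α| ≤ w / 2 → t ∈ G) :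
    atTop.liminf (fun N : ℕ => ({n | 1 ≤ n ∧ n ≤ N ∧ n ∈ S}.ncard : ℝ) / N) * α⁻¹ * w ≤
      atTop.liminf (fun T : ℝ => volume.real {t | 0 ≤ t ∧ t ≤ T ∧ t ∈ G} / T) := by
  set c : ℕ → ℝ := fun N => {n | 1 ≤ n ∧ n ≤ N ∧ n ∈ S}.ncard
  set M : ℝ → ℕ := fun T => ⌊(T - w / 2) / α⌋₊
  have hcobdd : IsCoboundedUnder (· ≥ ·) atTop
      (fun T : ℝ => volume.real {t | 0 ≤ t ∧ t ≤ T ∧ t ∈ G} / T) := by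
    refine isCoboundedUnder_ge_of_eventually_le atTop (x := 1) ?_
    filter_upwards [eventually_gt_atTop 0] with T hT
    exact div_le_one_of_le₀ (volume_real_sep_Icc_le G hT.le) hT.le
  refine le_of_forall_lt_imp_le_of_dense fun y hy => le_liminf_of_le hcobdd ?_
  have hαw : 0 < α⁻¹ * w := by positivity
  obtain ⟨ξ, hyξ, hξ⟩ : ∃ ξ, y / (α⁻¹ * w) < ξ ∧ ξ < atTop.liminf (fun N => c N / N) :=
    exists_between (by rwa [div_lt_iff₀ hαw, ← mul_assoc])
  rw [div_lt_iff₀ hαw] at hyξ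
  have hM : Tendsto M atTop atTop := tendsto_nat_floor_atTop.comp
    ((tendsto_atTop_add_const_right _ _ tendsto_id).atTop_div_const hα)
  have hcount : ∀ᶠ T in atTop, ξ * M T ≤ c (M T) := by
    refine hM.eventually (p := fun N => ξ * N ≤ c N) ?_
    filter_upwards [eventually_lt_of_lt_liminf hξ (isBoundedUnder_of_eventually_ge (a := 0)
      (.of_forall fun N => by positivity)), eventually_ge_atTop 1] with N hN hN1
    exact ((lt_div_iff₀ (by exact_mod_cast hN1)).1 hN).le
  have hdensity : ∀ᶠ T in atTop, y < w * ξ * (M T / T) :=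
    ((tendsto_natFloor_sub_div_div_atTop (w / 2) hα).const_mul (w * ξ)).eventually
      (lt_mem_nhds (by linarith))
  filter_upwards [hcount, hdensity, eventually_ge_atTop (w / 2), eventually_gt_atTop 0]
    with T hcount hdensity hTw hT
  have hMT : M T * α + w / 2 ≤ T := by
    have := Nat.floor_le (div_nonneg (sub_nonneg.2 hTw) hα.le)
    rw [le_div_iff₀ hα] at this
    linarith
  calc y ≤ w * ξ * (M T / T) := hdensity.le
    _ = w * (ξ * M T) / T := by ring
    _ ≤ w * c (M T) / T := by gcongr
    _ ≤ volume.real {t | 0 ≤ t ∧ t ≤ T ∧ t ∈ G} / T := by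
        gcongr
        exact mul_ncard_le_volume_real hw hwα hSG hMT

end Density

theorem stmt_19_general (D : Set ℂ) (Z : ℂ → ℂ) (α : ℝ) (hα : 0 < α) :
    ∀ K : Set ℂ, IsCompact K → IsConnected Kᶜ → K ⊆ D →
    ∀ ε > (0 : ℝ), ∀ f : ℂ → ℂ, ContinuousOn f K →
      DifferentiableOn ℂ f (interior K) → (∀ s ∈ K, f s ≠ 0) →
    ∀ K₀ : Set ℂ, IsCompact K₀ → IsConnected K₀ᶜ → K ⊆ K₀ → K₀ ⊆ D →
    ∀ δ : ℝ, 0 < δ → (∀ s ∈ K, ∀ z ∉ K₀, δ < dist s z) →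
    ∀ p : Polynomial ℂ,
      (∀ s ∈ K, ‖Complex.exp (p.eval s) - f s‖ < ε / 4) →
      (∀ τ : ℝ, |τ| ≤ δ → ∀ s ∈ K,
        ‖Complex.exp (p.eval (s + (τ : ℂ) * Complex.I))
          - Complex.exp (p.eval s)‖ < ε / 4) →
    ∀ ξ₁ : ℝ,
      ξ₁ = Filter.atTop.liminf (fun N : ℕ =>
        (({n : ℕ | 1 ≤ n ∧ n ≤ N ∧ ∀ s ∈ K₀,
          ‖Z (s + (((n : ℝ) * α : ℝ) : ℂ) * Complex.I)
            - Complex.exp (p.eval s)‖ < ε / 2}.ncard : ℝ)) / N) →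
      ξ₁ * α⁻¹ * min α (2 * δ) ≤ Filter.atTop.liminf (fun T : ℝ =>
        (volume {t : ℝ | 0 ≤ t ∧ t ≤ T ∧ ∀ s ∈ K,
          ‖Z (s + (t : ℂ) * Complex.I) - f s‖ < ε}).toReal / T) := by
  intro K _ _ _ ε _ f _ _ _ K₀ _ _ _ _ δ hδ hdist p hp hpshift ξ₁ rfl
  refine liminf_ncard_div_mul_le_liminf_volume_real_div hα (lt_min hα (by linarith))
    (min_le_left _ _) fun n hn t ht s hs => norm_sub_lt_of_shift hdist hp hpshift hn ?_ hs
  linarith [min_le_right α (2 * δ)]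

/-- Theorem 1, implication (2) → (1): α-discrete zero-free universality of `Z` in the
strip `D` implies continuous zero-free universality in `D`, with the explicit lower
bound `ξ₁ · α⁻¹ · min(α, 2δ)` on the density, where `ξ₁` is the discrete lower density
for the approximant `g = e^p` on the enlarged set `K₀` with accuracy `ε/2`. -/
theorem stmt_19 (σ₁ σ₂ : EReal) (hσ : σ₁ < σ₂)
    (D : Set ℂ) (hD : D = {s : ℂ | σ₁ < (s.re : EReal) ∧ (s.re : EReal) < σ₂})
    (Z : ℂ → ℂ) (α : ℝ) (hα : 0 < α)
    (hdisc : ∀ K : Set ℂ, IsCompact K → IsConnected Kᶜ → K ⊆ D →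
      ∀ ε > (0 : ℝ), ∀ f : ℂ → ℂ, ContinuousOn f K →
        DifferentiableOn ℂ f (interior K) → (∀ s ∈ K, f s ≠ 0) →
        0 < Filter.atTop.liminf (fun N : ℕ =>
          (({n : ℕ | 1 ≤ n ∧ n ≤ N ∧ ∀ s ∈ K,
            ‖Z (s + (((n : ℝ) * α : ℝ) : ℂ) * Complex.I) - f s‖ < ε}.ncard : ℝ))
            / N)) :
    ∀ K : Set ℂ, IsCompact K → IsConnected Kᶜ → K ⊆ D →
    ∀ ε > (0 : ℝ), ∀ f : ℂ → ℂ, ContinuousOn f K →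
      DifferentiableOn ℂ f (interior K) → (∀ s ∈ K, f s ≠ 0) →
    ∀ K₀ : Set ℂ, IsCompact K₀ → IsConnected K₀ᶜ → K ⊆ K₀ → K₀ ⊆ D →
    ∀ δ : ℝ, 0 < δ → (∀ s ∈ K, ∀ z ∉ K₀, δ < dist s z) →
    ∀ p : Polynomial ℂ,
      (∀ s ∈ K, ‖Complex.exp (p.eval s) - f s‖ < ε / 4) →
      (∀ τ : ℝ, |τ| ≤ δ → ∀ s ∈ K,
        ‖Complex.exp (p.eval (s + (τ : ℂ) * Complex.I))
          - Complex.exp (p.eval s)‖ < ε / 4) →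
    ∀ ξ₁ : ℝ,
      ξ₁ = Filter.atTop.liminf (fun N : ℕ =>
        (({n : ℕ | 1 ≤ n ∧ n ≤ N ∧ ∀ s ∈ K₀,
          ‖Z (s + (((n : ℝ) * α : ℝ) : ℂ) * Complex.I)
            - Complex.exp (p.eval s)‖ < ε / 2}.ncard : ℝ)) / N) →
      ξ₁ * α⁻¹ * min α (2 * δ) ≤ Filter.atTop.liminf (fun T : ℝ =>
        (volume {t : ℝ | 0 ≤ t ∧ t ≤ T ∧ ∀ s ∈ K,
          ‖Z (s + (t : ℂ) * Complex.I) - f s‖ < ε}).toReal / T) :=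
  stmt_19_general D Z α hα
end
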